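/- The image of φₙ is globular: for every n ≥ 2, every i with 2 ≤ i ≤ n, and all x, x' ∈ Iⁿ such that xᵢ = x'ᵢ ∈ {−1,1} and xⱼ = x'ⱼ for every j with i < j ≤ n, one has φₙ(x) = φₙ(x'). In other words, on each face {xᵢ = ±1} with i ≥ 2, the map φₙ depends only on the coordinates x_{i+1},…,xₙ. -/

import Mathlib

/-- The comparison map φₙ : Iⁿ → Gⁿ, defined recursively by φ₁(x₁) = x₁ and
    φₙ(t, y) = (t·√(1 − ‖φₙ₋₁(y)‖²), φₙ₋₁(y)). -/
noncomputable def phi : (n : ℕ) → EuclideanSpace ℝ (Fin n) → EuclideanSpace ℝ (Fin n)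
  | 0, x => x
  | n + 1, x =>
    WithLp.toLp 2 (Fin.cons (x 0 * Real.sqrt (1 - ‖phi n (WithLp.toLp 2 (fun i => x i.succ))‖ ^ 2))
        (phi n (WithLp.toLp 2 (fun i => x i.succ))) : Fin (n + 1) → ℝ)

/-- The n-cube Iⁿ = [−1,1]ⁿ, inside Euclidean n-space. -/
def cube (n : ℕ) : Set (EuclideanSpace ℝ (Fin n)) := {x | ∀ i, |x i| ≤ 1}

/-- The n-disk Dⁿ = {x : ‖x‖ ≤ 1}, the underlying space of the n-globe Gⁿ. -/
def disk (n : ℕ) : Set (EuclideanSpace ℝ (Fin n)) := {x | ‖x‖ ≤ 1}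

/-!
By induction, `1 - ‖φₙ(x)‖² = ∏ⱼ (1 - xⱼ²)` on the cube, so `φₙ₋₁` sends every face
`{xᵢ = ±1}` of `Iⁿ⁻¹` into the unit sphere. There the factor `√(1 - ‖φₙ₋₁(y)‖²)` vanishes and
`φₙ(t, y) = (0, φₙ₋₁(y))` forgets `t`. Peeling off the coordinates before the `i`-th one at a
time shows that on such a face `φₙ(x)` only depends on `xᵢ, …, xₙ`.
-/

def tail {n : ℕ} (x : EuclideanSpace ℝ (Fin (n + 1))) : EuclideanSpace ℝ (Fin n) :=
  WithLp.toLp 2 fun i => x i.succ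

lemma tail_mem_cube {n : ℕ} {x : EuclideanSpace ℝ (Fin (n + 1))} (hx : x ∈ cube (n + 1)) :
    tail x ∈ cube n :=
  fun i => hx i.succ

lemma EuclideanSpace.sq_norm_cons {n : ℕ} (a : ℝ) (v : EuclideanSpace ℝ (Fin n)) :
    ‖(WithLp.toLp 2 (Fin.cons a v : Fin (n + 1) → ℝ) : EuclideanSpace ℝ (Fin (n + 1)))‖ ^ 2 =
      a ^ 2 + ‖v‖ ^ 2 := by
  simp only [EuclideanSpace.real_norm_sq_eq, Fin.sum_univ_succ, Fin.cons_zero, Fin.cons_succ]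

lemma phi_succ {n : ℕ} (x : EuclideanSpace ℝ (Fin (n + 1))) :
    phi (n + 1) x = WithLp.toLp 2 (Fin.cons (x 0 * √(1 - ‖phi n (tail x)‖ ^ 2))
      (phi n (tail x)) : Fin (n + 1) → ℝ) :=
  rfl

lemma phi_succ_eq_cons_zero {n : ℕ} {x : EuclideanSpace ℝ (Fin (n + 1))}
    (hsphere : ‖phi n (tail x)‖ ^ 2 = 1) :
    phi (n + 1) x = WithLp.toLp 2 (Fin.cons 0 (phi n (tail x)) : Fin (n + 1) → ℝ) := by
  rw [phi_succ, hsphere, sub_self, Real.sqrt_zero, mul_zero]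

lemma one_sub_sq_norm_phi {n : ℕ} {x : EuclideanSpace ℝ (Fin n)} (hx : x ∈ cube n) :
    1 - ‖phi n x‖ ^ 2 = ∏ j, (1 - x j ^ 2) := by
  induction n with
  | zero => simp [phi, EuclideanSpace.real_norm_sq_eq]
  | succ n ih =>
    have htail : 1 - ‖phi n (tail x)‖ ^ 2 = ∏ j : Fin n, (1 - x j.succ ^ 2) :=
      ih (tail_mem_cube hx)
    have hdefect : 0 ≤ 1 - ‖phi n (tail x)‖ ^ 2 :=
      htail ▸ Finset.prod_nonneg fun j _ =>
        sub_nonneg.mpr ((sq_le_one_iff_abs_le_one _).mpr (hx j.succ))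
    rw [phi_succ, EuclideanSpace.sq_norm_cons, mul_pow, Real.sq_sqrt hdefect,
      Fin.prod_univ_succ, ← htail]
    ring

lemma sq_norm_phi_eq_one {n : ℕ} {x : EuclideanSpace ℝ (Fin n)} (hx : x ∈ cube n) {j : Fin n}
    (hj : x j ^ 2 = 1) : ‖phi n x‖ ^ 2 = 1 := by
  have hprod : ∏ k, (1 - x k ^ 2) = 0 :=
    Finset.prod_eq_zero (Finset.mem_univ j) (by rw [hj, sub_self])
  linarith [one_sub_sq_norm_phi hx]

lemma phi_eq_of_eq_on_face {n : ℕ} {i : Fin n} {x x' : EuclideanSpace ℝ (Fin n)}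
    (hx : x ∈ cube n) (heq : x i = x' i) (hface : x i ^ 2 = 1)
    (hgt : ∀ j, i < j → x j = x' j) :
    phi n x = phi n x' := by
  induction n with
  | zero => exact i.elim0
  | succ n ih =>
    induction i using Fin.cases with
    | zero =>
      congr 1
      ext j
      induction j using Fin.cases with
      | zero => exact heq
      | succ j => exact hgt j.succ (Fin.succ_pos j)
    | succ i =>
      have htail : phi n (tail x) = phi n (tail x') :=
        ih (tail_mem_cube hx) heq hface fun j hj => hgt j.succ (Fin.succ_lt_succ_iff.mpr hj)
      have hsphere : ‖phi n (tail x)‖ ^ 2 = 1 := sq_norm_phi_eq_one (tail_mem_cube hx) hface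
      rw [phi_succ_eq_cons_zero hsphere, phi_succ_eq_cons_zero (htail ▸ hsphere), htail]

theorem phi_eq_on_faces_general (n : ℕ) (i : Fin n)
    (x x' : EuclideanSpace ℝ (Fin n)) (hx : x ∈ cube n)
    (heq : x i = x' i) (hval : x i = 1 ∨ x i = -1)
    (hgt : ∀ j : Fin n, i < j → x j = x' j) :
    phi n x = phi n x' :=
  phi_eq_of_eq_on_face hx heq (sq_eq_one_iff.mpr hval) hgt

/-- the image of `φₙ` is globular. For `n ≥ 2` and an index `i ≥ 1`
(0-based; `2 ≤ i ≤ n` 1-based), if `x, x' ∈ Iⁿ` agree in the `i`-th coordinate, which is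
`±1`, and agree in all coordinates after the `i`-th, then `φₙ(x) = φₙ(x')`: on each face
`{xᵢ = ±1}` with `i ≥ 2` the map `φₙ` depends only on the later coordinates. -/
theorem phi_eq_on_faces (n : ℕ) (hn : 2 ≤ n) (i : Fin n) (hi : 1 ≤ (i : ℕ))
    (x x' : EuclideanSpace ℝ (Fin n)) (hx : x ∈ cube n) (hx' : x' ∈ cube n)
    (heq : x i = x' i) (hval : x i = 1 ∨ x i = -1)
    (hgt : ∀ j : Fin n, i < j → x j = x' j) :
    phi n x = phi n x' :=
  phi_eq_on_faces_general n i x x' hx heq hval hgt
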